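/- Let φ : [0,∞) → [0,∞) with Λ = ∫_0^∞ φ(s) ds < ∞. Then for all n ∈ ℕ_+ and t ≥ 0, |∫_0^t φ^{*n}(s) ds − Λ^n| ≤ n Λ^{n-1} ∫_{t/n}^∞ φ(s) ds. -/

import Mathlib

/-!
Work with the `ℝ≥0∞`-valued integrals of `ofReal ∘ φ^{*n}`, where no integrability has to be
tracked. Fubini and translation invariance give `∫_0^∞ φ^{*n} = Λ^n`, so the quantity to bound is
the tail `∫_t^∞ φ^{*n}`. For `u > t` every `s ∈ (0, u]` has `u - s > a` or `s > t - a`, hence the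
tail of `f * g` beyond `t` is at most `(∫_a^∞ f) (∫_0^∞ g) + (∫_0^∞ f) (∫_{t-a}^∞ g)`; with
`a = t / n` this gives the bound by induction on `n`. This is the analytic form of the union bound
`P(X_1 + ⋯ + X_n ≥ t) ≤ n P(X_1 ≥ t / n)`.
-/

open MeasureTheory

/-- Convolution f*g(t) = ∫_0^t f(t−s) g(s) ds (vanishing for t ≤ 0). -/
noncomputable def conv (f g : ℝ → ℝ) (t : ℝ) : ℝ :=
  ∫ s in Set.Ioc 0 t, f (t - s) * g s

/-- n-fold convolution φ^{*n} of φ (for n ≥ 1; the value at n = 0 is irrelevant here). -/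
noncomputable def convIter (φ : ℝ → ℝ) : ℕ → ℝ → ℝ
  | 0 => fun _ => 0
  | 1 => φ
  | n + 2 => conv φ (convIter φ (n + 1))

open Set ENNReal

theorem MeasureTheory.lintegral_lconvolution {G : Type*} [MeasurableSpace G] [AddGroup G]
    [MeasurableAdd₂ G] [MeasurableNeg G] {μ : Measure G} [μ.IsAddLeftInvariant] [SFinite μ]
    {f g : G → ℝ≥0∞} (hf : AEMeasurable f μ) (hg : AEMeasurable g μ) :
    ∫⁻ x, (f ⋆ₗ[μ] g) x ∂μ = (∫⁻ x, f x ∂μ) * ∫⁻ x, g x ∂μ := by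
  simp only [lconvolution_def]
  rw [lintegral_lintegral_swap (by fun_prop), ← lintegral_mul_const'' _ hf]
  refine lintegral_congr fun y => ?_
  have hg' : AEMeasurable (fun x => g (-y + x)) μ :=
    hg.comp_quasiMeasurePreserving (measurePreserving_add_left μ _).quasiMeasurePreserving
  rw [lintegral_const_mul'' _ hg', lintegral_add_left_eq_self]

/-- The `ℝ≥0∞`-valued counterpart of `conv` (see `causalLConv_apply`). -/
noncomputable def causalLConv (F G : ℝ → ℝ≥0∞) : ℝ → ℝ≥0∞ :=
  (Ioi 0).indicator G ⋆ₗ (Ici 0).indicator F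

section causalLConv

variable {F G : ℝ → ℝ≥0∞}

theorem causalLConv_apply (F G : ℝ → ℝ≥0∞) (u : ℝ) :
    causalLConv F G u = ∫⁻ s in Ioc 0 u, F (u - s) * G s := by
  rw [causalLConv, lconvolution_def, ← lintegral_indicator measurableSet_Ioc]
  refine lintegral_congr fun s => ?_
  by_cases hs : 0 < s <;> by_cases hsu : s ≤ u <;>
    simp [hs, hsu, neg_add_eq_sub, mul_comm]

theorem causalLConv_of_nonpos (F G : ℝ → ℝ≥0∞) {u : ℝ} (hu : u ≤ 0) :
    causalLConv F G u = 0 := by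
  rw [causalLConv_apply, Ioc_eq_empty (not_lt.2 hu), Measure.restrict_empty,
    lintegral_zero_measure]

theorem measurable_causalLConv (hF : Measurable F) (hG : Measurable G) :
    Measurable (causalLConv F G) :=
  measurable_lconvolution _ (hG.indicator measurableSet_Ioi) (hF.indicator measurableSet_Ici)

theorem setLIntegral_Ioi_causalLConv (hF : Measurable F) (hG : Measurable G) :
    ∫⁻ u in Ioi 0, causalLConv F G u = (∫⁻ x in Ioi 0, F x) * ∫⁻ x in Ioi 0, G x := by
  rw [setLIntegral_eq_of_support_subset, causalLConv, lintegral_lconvolution,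
    lintegral_indicator measurableSet_Ioi, lintegral_indicator measurableSet_Ici,
    setLIntegral_congr Ioi_ae_eq_Ici.symm, mul_comm]
  · exact (hG.indicator measurableSet_Ioi).aemeasurable
  · exact (hF.indicator measurableSet_Ici).aemeasurable
  · exact Function.support_subset_iff'.2 fun u hu => causalLConv_of_nonpos F G (not_lt.1 hu)

/-- Splitting at `s = t - a`: one of `u - s > a` and `s > t - a` holds when `u > t`. -/
theorem causalLConv_le_add (hF : Measurable F) (hG : Measurable G) {a t u : ℝ} (hu : t < u) :
    causalLConv F G u ≤
      causalLConv ((Ioi a).indicator F) G u + causalLConv F ((Ioi (t - a)).indicator G) u := by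
  simp only [causalLConv_apply]
  have hFa : Measurable fun s => (Ioi a).indicator F (u - s) * G s :=
    ((hF.indicator measurableSet_Ioi).comp (measurable_const.sub measurable_id)).mul hG
  rw [← lintegral_add_left hFa]
  refine lintegral_mono fun s => ?_
  by_cases hs : s ≤ t - a
  · simp [indicator_of_mem (show u - s ∈ Ioi a by simp; linarith)]
  · simp [indicator_of_mem (show s ∈ Ioi (t - a) by simp; linarith)]

theorem setLIntegral_Ioi_causalLConv_le (hF : Measurable F) (hG : Measurable G) {a t : ℝ}
    (ha : 0 ≤ a) (hat : a ≤ t) :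
    ∫⁻ u in Ioi t, causalLConv F G u ≤
      (∫⁻ x in Ioi a, F x) * (∫⁻ x in Ioi 0, G x) +
        (∫⁻ x in Ioi 0, F x) * ∫⁻ x in Ioi (t - a), G x := by
  have hFa := hF.indicator (measurableSet_Ioi (a := a))
  have hGa := hG.indicator (measurableSet_Ioi (a := t - a))
  calc ∫⁻ u in Ioi t, causalLConv F G u
      ≤ ∫⁻ u in Ioi t, (causalLConv ((Ioi a).indicator F) G u +
          causalLConv F ((Ioi (t - a)).indicator G) u) :=
        setLIntegral_mono' measurableSet_Ioi fun u hu => causalLConv_le_add hF hG hu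
    _ ≤ ∫⁻ u in Ioi 0, (causalLConv ((Ioi a).indicator F) G u +
          causalLConv F ((Ioi (t - a)).indicator G) u) :=
        lintegral_mono_set (Ioi_subset_Ioi (ha.trans hat))
    _ = _ := by
        rw [lintegral_add_left (measurable_causalLConv hFa hG),
          setLIntegral_Ioi_causalLConv hFa hG, setLIntegral_Ioi_causalLConv hF hGa,
          setLIntegral_indicator measurableSet_Ioi, setLIntegral_indicator measurableSet_Ioi,
          Ioi_inter_Ioi, Ioi_inter_Ioi, sup_eq_left.2 ha, sup_eq_left.2 (sub_nonneg.2 hat)]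

end causalLConv

section conv

variable {f g : ℝ → ℝ}

theorem conv_eq_toReal_causalLConv (hf : Measurable f) (hg : Measurable g) (hf₀ : ∀ x, 0 ≤ f x)
    (hg₀ : ∀ x, 0 ≤ g x) (u : ℝ) :
    conv f g u =
      (causalLConv (fun x => ENNReal.ofReal (f x)) (fun x => ENNReal.ofReal (g x)) u).toReal := by
  rw [conv, causalLConv_apply, integral_eq_lintegral_of_nonneg_ae
    (ae_of_all _ fun _ => mul_nonneg (hf₀ _) (hg₀ _)) (by fun_prop)]
  simp_rw [ENNReal.ofReal_mul (hf₀ _)]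

theorem measurable_conv (hf : Measurable f) (hg : Measurable g) (hf₀ : ∀ x, 0 ≤ f x)
    (hg₀ : ∀ x, 0 ≤ g x) : Measurable (conv f g) := by
  rw [funext (conv_eq_toReal_causalLConv hf hg hf₀ hg₀)]
  exact (measurable_causalLConv hf.ennreal_ofReal hg.ennreal_ofReal).ennreal_toReal

theorem ofReal_conv_ae_eq (hf : Measurable f) (hg : Measurable g) (hf₀ : ∀ x, 0 ≤ f x)
    (hg₀ : ∀ x, 0 ≤ g x) (hfi : ∫⁻ x in Ioi 0, ENNReal.ofReal (f x) ≠ ∞)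
    (hgi : ∫⁻ x in Ioi 0, ENNReal.ofReal (g x) ≠ ∞) :
    ∀ᵐ u ∂volume.restrict (Ioi 0), ENNReal.ofReal (conv f g u) =
      causalLConv (fun x => ENNReal.ofReal (f x)) (fun x => ENNReal.ofReal (g x)) u := by
  have hF := hf.ennreal_ofReal
  have hG := hg.ennreal_ofReal
  filter_upwards [ae_lt_top (measurable_causalLConv hF hG)
    (by rw [setLIntegral_Ioi_causalLConv hF hG]; exact mul_ne_top hfi hgi)] with u hu
  rw [conv_eq_toReal_causalLConv hf hg hf₀ hg₀, ofReal_toReal hu.ne]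

theorem conv_nonneg (hf₀ : ∀ x, 0 ≤ f x) (hg₀ : ∀ x, 0 ≤ g x) (u : ℝ) : 0 ≤ conv f g u :=
  integral_nonneg fun _ => mul_nonneg (hf₀ _) (hg₀ _)

end conv

section convIter

variable {φ : ℝ → ℝ}

theorem convIter_nonneg (hφ₀ : ∀ x, 0 ≤ φ x) : ∀ n x, 0 ≤ convIter φ n x
  | 0, _ => le_rfl
  | 1, x => hφ₀ x
  | n + 2, x => conv_nonneg hφ₀ (convIter_nonneg hφ₀ (n + 1)) x

theorem measurable_convIter (hφ : Measurable φ) (hφ₀ : ∀ x, 0 ≤ φ x) :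
    ∀ n, Measurable (convIter φ n)
  | 0 => measurable_const
  | 1 => hφ
  | n + 2 =>
    measurable_conv hφ (measurable_convIter hφ hφ₀ (n + 1)) hφ₀ (convIter_nonneg hφ₀ (n + 1))

theorem ofReal_convIter_ae_eq (hφ : Measurable φ) (hφ₀ : ∀ x, 0 ≤ φ x)
    (hΛ : ∫⁻ x in Ioi 0, ENNReal.ofReal (φ x) ≠ ∞) {n : ℕ}
    (hn : ∫⁻ x in Ioi 0, ENNReal.ofReal (convIter φ (n + 1) x) ≠ ∞) :
    ∀ᵐ u ∂volume.restrict (Ioi 0), ENNReal.ofReal (convIter φ (n + 2) u) =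
      causalLConv (fun x => ENNReal.ofReal (φ x))
        (fun x => ENNReal.ofReal (convIter φ (n + 1) x)) u :=
  ofReal_conv_ae_eq hφ (measurable_convIter hφ hφ₀ _) hφ₀ (convIter_nonneg hφ₀ _) hΛ hn

theorem setLIntegral_Ioi_ofReal_convIter (hφ : Measurable φ) (hφ₀ : ∀ x, 0 ≤ φ x)
    (hΛ : ∫⁻ x in Ioi 0, ENNReal.ofReal (φ x) ≠ ∞) :
    ∀ n : ℕ, ∫⁻ u in Ioi 0, ENNReal.ofReal (convIter φ (n + 1) u) =
      (∫⁻ x in Ioi 0, ENNReal.ofReal (φ x)) ^ (n + 1)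
  | 0 => by simp [convIter]
  | n + 1 => by
    have ih := setLIntegral_Ioi_ofReal_convIter hφ hφ₀ hΛ n
    rw [lintegral_congr_ae (ofReal_convIter_ae_eq hφ hφ₀ hΛ (ih ▸ pow_ne_top hΛ)),
      setLIntegral_Ioi_causalLConv hφ.ennreal_ofReal
        (measurable_convIter hφ hφ₀ _).ennreal_ofReal, ih, ← pow_succ']

theorem setLIntegral_Ioi_ofReal_convIter_le (hφ : Measurable φ) (hφ₀ : ∀ x, 0 ≤ φ x)
    (hΛ : ∫⁻ x in Ioi 0, ENNReal.ofReal (φ x) ≠ ∞) :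
    ∀ (n : ℕ) {t : ℝ}, 0 ≤ t → ∫⁻ u in Ioi t, ENNReal.ofReal (convIter φ (n + 1) u) ≤
      ((n + 1 : ℕ) : ℝ≥0∞) * (∫⁻ x in Ioi 0, ENNReal.ofReal (φ x)) ^ n *
        ∫⁻ x in Ioi (t / (n + 1 : ℕ)), ENNReal.ofReal (φ x)
  | 0, t, _ => by simp [convIter]
  | n + 1, t, ht => by
    set Λ := ∫⁻ x in Ioi 0, ENNReal.ofReal (φ x)
    set a := t / (n + 2 : ℕ)
    have ha : 0 ≤ a := by positivity
    have hat : a ≤ t := div_le_self ht (Nat.one_le_cast.2 (by omega))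
    have hrec : (t - a) / (n + 1 : ℕ) = a := by
      simp only [a]; field_simp; push_cast; ring
    have htot := setLIntegral_Ioi_ofReal_convIter hφ hφ₀ hΛ n
    have ih := setLIntegral_Ioi_ofReal_convIter_le hφ hφ₀ hΛ n (sub_nonneg.2 hat)
    rw [hrec] at ih
    calc ∫⁻ u in Ioi t, ENNReal.ofReal (convIter φ (n + 2) u)
        = ∫⁻ u in Ioi t, causalLConv (fun x => ENNReal.ofReal (φ x))
            (fun x => ENNReal.ofReal (convIter φ (n + 1) x)) u :=
          lintegral_congr_ae <| ae_restrict_of_ae_restrict_of_subset (Ioi_subset_Ioi ht) <|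
            ofReal_convIter_ae_eq hφ hφ₀ hΛ (htot ▸ pow_ne_top hΛ)
      _ ≤ (∫⁻ x in Ioi a, ENNReal.ofReal (φ x)) * Λ ^ (n + 1) +
            Λ * ∫⁻ x in Ioi (t - a), ENNReal.ofReal (convIter φ (n + 1) x) := by
          rw [← htot]
          exact setLIntegral_Ioi_causalLConv_le hφ.ennreal_ofReal
            (measurable_convIter hφ hφ₀ _).ennreal_ofReal ha hat
      _ ≤ (∫⁻ x in Ioi a, ENNReal.ofReal (φ x)) * Λ ^ (n + 1) +
            Λ * (((n + 1 : ℕ) : ℝ≥0∞) * Λ ^ n * ∫⁻ x in Ioi a, ENNReal.ofReal (φ x)) := by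
          gcongr
      _ = ((n + 1 + 1 : ℕ) : ℝ≥0∞) * Λ ^ (n + 1) * ∫⁻ x in Ioi a, ENNReal.ofReal (φ x) := by
          push_cast; ring

end convIter

theorem abs_setIntegral_Ioc_sub_le {g : ℝ → ℝ} {t L R : ℝ} (hg : Measurable g)
    (hg₀ : ∀ x, 0 ≤ g x) (ht : 0 ≤ t) (hL : 0 ≤ L) (hR : 0 ≤ R)
    (htot : ∫⁻ x in Ioi 0, ENNReal.ofReal (g x) = ENNReal.ofReal L)
    (htail : ∫⁻ x in Ioi t, ENNReal.ofReal (g x) ≤ ENNReal.ofReal R) :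
    |(∫ x in Ioc 0 t, g x) - L| ≤ R := by
  set B := ∫⁻ x in Ioc 0 t, ENNReal.ofReal (g x)
  set T := ∫⁻ x in Ioi t, ENNReal.ofReal (g x)
  have hBT : B + T = ENNReal.ofReal L := by
    rw [← lintegral_union measurableSet_Ioi (Ioc_disjoint_Ioi le_rfl), Ioc_union_Ioi_eq_Ioi ht,
      htot]
  have hB : B ≠ ∞ := ne_top_of_le_ne_top ofReal_ne_top (hBT ▸ le_self_add)
  have hT : T ≠ ∞ := ne_top_of_le_ne_top ofReal_ne_top (hBT ▸ le_add_self)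
  have hL' : L = B.toReal + T.toReal := by rw [← toReal_add hB hT, hBT, toReal_ofReal hL]
  rw [integral_eq_lintegral_of_nonneg_ae (ae_of_all _ hg₀) hg.aestronglyMeasurable, hL',
    sub_add_cancel_left, abs_neg, abs_of_nonneg toReal_nonneg]
  exact toReal_le_of_le_ofReal hR htail

theorem stmt3_general (φ : ℝ → ℝ)
    (hφmeas : Measurable φ) (hφnn : ∀ s, 0 ≤ φ s)
    (hΛint : IntegrableOn φ (Set.Ioi 0)) :
    ∀ n : ℕ, 1 ≤ n → ∀ t : ℝ, 0 ≤ t →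
      |(∫ s in Set.Ioc (0:ℝ) t, convIter φ n s) - (∫ s in Set.Ioi (0:ℝ), φ s) ^ n|
        ≤ (n : ℝ) * (∫ s in Set.Ioi (0:ℝ), φ s) ^ (n - 1) *
            ∫ s in Set.Ioi (t / n), φ s := by
  intro n hn t ht
  obtain ⟨m, rfl⟩ := Nat.exists_eq_add_of_le' hn
  have tail_nonneg (a : ℝ) : 0 ≤ ∫ x in Ioi a, φ x :=
    setIntegral_nonneg measurableSet_Ioi fun x _ => hφnn x
  have lintegral_tail {a : ℝ} (ha : 0 ≤ a) :
      ∫⁻ x in Ioi a, ENNReal.ofReal (φ x) = ENNReal.ofReal (∫ x in Ioi a, φ x) :=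
    (ofReal_integral_eq_lintegral_ofReal (hΛint.mono_set (Ioi_subset_Ioi ha))
      (ae_of_all _ hφnn)).symm
  have hΛ := lintegral_tail le_rfl
  have hΛfin : ∫⁻ x in Ioi 0, ENNReal.ofReal (φ x) ≠ ∞ := hΛ ▸ ofReal_ne_top
  have hΛ₀ := tail_nonneg 0
  refine abs_setIntegral_Ioc_sub_le (measurable_convIter hφmeas hφnn _) (convIter_nonneg hφnn _)
    ht (pow_nonneg hΛ₀ _) (mul_nonneg (by positivity) (tail_nonneg _)) ?_ ?_
  · rw [setLIntegral_Ioi_ofReal_convIter hφmeas hφnn hΛfin, hΛ, ofReal_pow hΛ₀]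
  · refine (setLIntegral_Ioi_ofReal_convIter_le hφmeas hφnn hΛfin m ht).trans_eq ?_
    rw [Nat.add_sub_cancel, ofReal_mul (by positivity), ofReal_mul (by positivity),
      ofReal_pow hΛ₀, ofReal_natCast, hΛ, lintegral_tail (by positivity)]

/-- If Λ = ∫_0^∞ φ < ∞ then for all n ≥ 1 and t ≥ 0,
`|∫_0^t φ^{*n}(s) ds − Λ^n| ≤ n Λ^{n−1} ∫_{t/n}^∞ φ(s) ds`. -/
theorem stmt3 (φ : ℝ → ℝ)
    (hφmeas : Measurable φ) (hφnn : ∀ s, 0 ≤ φ s) (hφ0 : ∀ s < (0:ℝ), φ s = 0)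
    (hΛpos : 0 < ∫ s in Set.Ioi (0:ℝ), φ s)
    (hΛint : IntegrableOn φ (Set.Ioi 0)) :
    ∀ n : ℕ, 1 ≤ n → ∀ t : ℝ, 0 ≤ t →
      |(∫ s in Set.Ioc (0:ℝ) t, convIter φ n s) - (∫ s in Set.Ioi (0:ℝ), φ s) ^ n|
        ≤ (n : ℝ) * (∫ s in Set.Ioi (0:ℝ), φ s) ^ (n - 1) *
            ∫ s in Set.Ioi (t / n), φ s :=
  stmt3_general φ hφmeas hφnn hΛint
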